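/- For positive semidefinite K_x and matrices A, F, the matrix B* = A K_x Fᴴ (F K_x Fᴴ)† F minimizes tr((B−A) K_x (B−A)ᴴ) over all matrices B of the form B = G F, i.e., for every G, tr((GF − A) K_x (GF − A)ᴴ) ≥ tr((B* − A) K_x (B* − A)ᴴ). -/

import Mathlib

/-!
Write `M = F Kx Fᴴ` and `B = H F` with `H = A Kx Fᴴ P`. The Penrose condition `M P M = M` gives
the normal equation `(B - A) Kx Fᴴ = 0`: factor `Kx = Rᴴ R`, so that `M = Cᴴ C` with
`C = R Fᴴ`, and any generalized inverse `P` of a Gram matrix `Cᴴ C` satisfies `C P (Cᴴ C) = C`.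
The normal equation makes `(G - H) F` and `B - A` orthogonal for the semi-inner product
`(X, Y) ↦ tr (X Kx Yᴴ)`, so `tr ((G F - A) Kx (G F - A)ᴴ)` is `tr ((B - A) Kx (B - A)ᴴ)` plus
the nonnegative trace of the positive semidefinite matrix `((G - H) F) Kx ((G - H) F)ᴴ`.
-/

open Matrix
open scoped ComplexOrder

/-- The four Penrose conditions characterizing the Moore–Penrose pseudoinverse. -/
def IsMoorePenrose {m n : ℕ} (M : Matrix (Fin m) (Fin n) ℂ) (P : Matrix (Fin n) (Fin m) ℂ) : Prop :=
  M * P * M = M ∧ P * M * P = P ∧ (M * P)ᴴ = M * P ∧ (P * M)ᴴ = P * M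

namespace Matrix

variable {l m n 𝕜 : Type*} [Fintype n] [RCLike 𝕜]

lemma mul_mul_conjTranspose_mul_self_eq_self [Fintype m] {C : Matrix m n 𝕜} {X : Matrix n n 𝕜}
    (hX : Cᴴ * C * X * (Cᴴ * C) = Cᴴ * C) : C * X * (Cᴴ * C) = C := by
  classical
  set D := X * (Cᴴ * C) - 1
  have hD : (C * D)ᴴ * (C * D) = 0 :=
    calc (C * D)ᴴ * (C * D) = Dᴴ * (Cᴴ * (C * D)) := by
          simp only [conjTranspose_mul, Matrix.mul_assoc]
      _ = Dᴴ * (Cᴴ * C * X * (Cᴴ * C) - Cᴴ * C) := by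
          simp only [D, Matrix.mul_sub, Matrix.mul_one, Matrix.mul_assoc]
      _ = 0 := by rw [hX, sub_self, Matrix.mul_zero]
  simpa [D, Matrix.mul_sub, sub_eq_zero, Matrix.mul_assoc] using
    conjTranspose_mul_self_eq_zero.mp hD

open scoped MatrixOrder in
lemma PosSemidef.mul_conjTranspose_mul_mul_eq_mul_conjTranspose [Fintype m] {K : Matrix n n 𝕜}
    (hK : K.PosSemidef) (F : Matrix m n 𝕜) {X : Matrix m m 𝕜}
    (hX : F * K * Fᴴ * X * (F * K * Fᴴ) = F * K * Fᴴ) :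
    K * Fᴴ * X * (F * K * Fᴴ) = K * Fᴴ := by
  classical
  obtain ⟨R, rfl⟩ := CStarAlgebra.nonneg_iff_eq_star_mul_self.mp hK.nonneg
  have hGram : F * (star R * R) * Fᴴ = (R * Fᴴ)ᴴ * (R * Fᴴ) := by
    simp only [conjTranspose_mul, conjTranspose_conjTranspose, star_eq_conjTranspose,
      Matrix.mul_assoc]
  rw [hGram] at hX ⊢
  calc star R * R * Fᴴ * X * ((R * Fᴴ)ᴴ * (R * Fᴴ))
      = Rᴴ * (R * Fᴴ * X * ((R * Fᴴ)ᴴ * (R * Fᴴ))) := by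
        simp only [star_eq_conjTranspose, Matrix.mul_assoc]
    _ = star R * R * Fᴴ := by
        rw [mul_mul_conjTranspose_mul_self_eq_self hX, star_eq_conjTranspose, Matrix.mul_assoc]

lemma mul_mul_conjTranspose_add_eq_of_mul_mul_conjTranspose_eq_zero {K : Matrix n n 𝕜}
    (hK : K.IsHermitian) {X Y : Matrix m n 𝕜} (hXY : X * K * Yᴴ = 0) :
    (X + Y) * K * (X + Y)ᴴ = X * K * Xᴴ + Y * K * Yᴴ := by
  have hYX : Y * K * Xᴴ = 0 := by
    simpa [conjTranspose_mul, hK.eq, Matrix.mul_assoc] using congrArg conjTranspose hXY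
  simp only [conjTranspose_add, Matrix.add_mul, Matrix.mul_add, hXY, hYX]
  abel

theorem re_trace_mul_mul_conjTranspose_le_of_mul_mul_conjTranspose_eq_zero
    [Fintype l] [Fintype m] {K : Matrix n n 𝕜}
    (hK : K.PosSemidef) {A : Matrix l n 𝕜} {F : Matrix m n 𝕜} {H : Matrix l m 𝕜}
    (hH : (H * F - A) * K * Fᴴ = 0) (G : Matrix l m 𝕜) :
    RCLike.re ((H * F - A) * K * (H * F - A)ᴴ).trace ≤
      RCLike.re ((G * F - A) * K * (G * F - A)ᴴ).trace := by
  have hsplit : G * F - A = (G - H) * F + (H * F - A) := by rw [Matrix.sub_mul]; abel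
  have hcross : (G - H) * F * K * (H * F - A)ᴴ = 0 := by
    calc (G - H) * F * K * (H * F - A)ᴴ = (G - H) * ((H * F - A) * K * Fᴴ)ᴴ := by
          simp only [conjTranspose_mul, hK.isHermitian.eq, conjTranspose_conjTranspose,
            Matrix.mul_assoc]
      _ = 0 := by rw [hH, conjTranspose_zero, Matrix.mul_zero]
  rw [hsplit, mul_mul_conjTranspose_add_eq_of_mul_mul_conjTranspose_eq_zero hK.isHermitian hcross,
    trace_add, map_add, le_add_iff_nonneg_left]
  exact (RCLike.nonneg_iff.mp (hK.mul_mul_conjTranspose_same _).trace_nonneg).1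

end Matrix

theorem optimal_linear_attack_matrix (N q p : ℕ)
    (A : Matrix (Fin N) (Fin p) ℂ) (F : Matrix (Fin q) (Fin p) ℂ)
    (Kx : Matrix (Fin p) (Fin p) ℂ) (hKx : Kx.PosSemidef)
    (P : Matrix (Fin q) (Fin q) ℂ) (hP : IsMoorePenrose (F * Kx * Fᴴ) P) :
    ∀ G : Matrix (Fin N) (Fin q) ℂ,
      ((G * F - A) * Kx * (G * F - A)ᴴ).trace.re ≥
        ((A * Kx * Fᴴ * P * F - A) * Kx * (A * Kx * Fᴴ * P * F - A)ᴴ).trace.re := by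
  have hNormal : (A * Kx * Fᴴ * P * F - A) * Kx * Fᴴ = 0 := by
    calc (A * Kx * Fᴴ * P * F - A) * Kx * Fᴴ
        = A * (Kx * Fᴴ * P * (F * Kx * Fᴴ)) - A * (Kx * Fᴴ) := by
          simp only [Matrix.sub_mul, Matrix.mul_assoc]
      _ = 0 := by rw [hKx.mul_conjTranspose_mul_mul_eq_mul_conjTranspose F hP.1, sub_self]
  exact re_trace_mul_mul_conjTranspose_le_of_mul_mul_conjTranspose_eq_zero hKx hNormal
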